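/- arXiv:0810.3978 — 3 statements merged into one kernel-verified Lean document; each statement's English description precedes it below -/
import Mathlib

section
/- The function Σ ↦ -(n/2)·log det(Σ) - (1/2)·tr(S Σ⁻¹), defined on k×k symmetric positive definite matrices, attains its unique maximum at Σ = S/n, where S is a fixed k×k symmetric positive definite matrix and n > 0. -/
/-!
Factor `S = Bᴴ B` with `B` invertible and put `A = B Σ⁻¹ Bᴴ`, a positive definite matrix with
`tr A = tr (S Σ⁻¹)` and `log det A = log det S - log det Σ`. Up to the constant `-(n/2) log det S`
the objective becomes `(n log det A - tr A) / 2 = ∑ᵢ (n log λᵢ - λᵢ) / 2` over the eigenvalues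
`λᵢ` of `A`. Since `log x ≤ x - 1`, each summand is at most `n log n - n`, with equality only at
`λᵢ = n`; so the maximum is attained exactly when `A = n • 1`, that is, when `Σ = S / n`.
-/

open Matrix Real

namespace Real

lemma mul_log_sub_lt_mul_log_sub {n x : ℝ} (hn : 0 < n) (hx : 0 < x) (hxn : x ≠ n) :
    n * log x - x < n * log n - n := by
  have h := log_lt_sub_one_of_pos (div_pos hx hn) (div_ne_one_of_ne hxn)
  rw [log_div hx.ne' hn.ne'] at h
  have := mul_lt_mul_of_pos_left h hn
  rw [mul_sub, mul_sub, mul_div_cancel₀ x hn.ne', mul_one] at this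
  linarith

lemma mul_log_sub_le_mul_log_sub {n x : ℝ} (hn : 0 < n) (hx : 0 < x) :
    n * log x - x ≤ n * log n - n := by
  rcases eq_or_ne x n with rfl | hxn
  · exact le_rfl
  · exact (mul_log_sub_lt_mul_log_sub hn hx hxn).le

end Real

namespace Matrix

variable {ι : Type*} [Fintype ι] [DecidableEq ι]

lemma IsHermitian.eq_smul_one_of_eigenvalues_eq {𝕜 : Type*} [RCLike 𝕜] {A : Matrix ι ι 𝕜}
    (hA : A.IsHermitian) {c : ℝ} (h : ∀ i, hA.eigenvalues i = c) : A = (c : 𝕜) • 1 := by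
  rw [hA.spectral_theorem, show RCLike.ofReal ∘ hA.eigenvalues = fun _ => (c : 𝕜) from
    funext fun i => by simp [h], ← smul_one_eq_diagonal, map_smul, map_one]

open scoped ComplexOrder MatrixOrder in
lemma PosDef.exists_isUnit_conjTranspose_mul_self_eq {𝕜 : Type*} [RCLike 𝕜]
    {S : Matrix ι ι 𝕜} (hS : S.PosDef) : ∃ B : Matrix ι ι 𝕜, IsUnit B ∧ Bᴴ * B = S := by
  obtain ⟨B, rfl⟩ := CStarAlgebra.nonneg_iff_eq_star_mul_self.mp hS.posSemidef.nonneg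
  exact ⟨B, isUnit_of_mul_isUnit_right hS.isUnit, rfl⟩

lemma mul_inv_mul_conjTranspose_eq_smul_one_iff {K : Type*} [Field K] [StarRing K]
    {B Sig : Matrix ι ι K} (hB : IsUnit B) (hSig : IsUnit Sig) {c : K} (hc : c ≠ 0) :
    B * Sig⁻¹ * Bᴴ = c • 1 ↔ Sig = c⁻¹ • (Bᴴ * B) := by
  rw [isUnit_iff_isUnit_det] at hB hSig
  have hBH : IsUnit Bᴴ.det := by rw [det_conjTranspose]; exact hB.star
  have hinv : (c⁻¹ • (Bᴴ * B))⁻¹ = c • (B⁻¹ * Bᴴ⁻¹) := by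
    refine inv_eq_left_inv ?_
    rw [smul_mul_smul_comm, mul_inv_cancel₀ hc, one_smul, Matrix.mul_assoc,
      Matrix.nonsing_inv_mul_cancel_left _ _ hBH, nonsing_inv_mul _ hB]
  constructor
  · intro h
    refine inv_inj ?_ hSig
    calc Sig⁻¹ = B⁻¹ * (B * Sig⁻¹ * Bᴴ) * Bᴴ⁻¹ := by
          rw [Matrix.mul_assoc B, Matrix.nonsing_inv_mul_cancel_left _ _ hB,
            Matrix.mul_nonsing_inv_cancel_right _ _ hBH]
      _ = (c⁻¹ • (Bᴴ * B))⁻¹ := by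
          rw [h, hinv, Matrix.mul_smul, Matrix.mul_one, Matrix.smul_mul]
  · rintro rfl
    rw [hinv, Matrix.mul_smul, Matrix.smul_mul, ← Matrix.mul_assoc, mul_nonsing_inv _ hB,
      Matrix.one_mul, nonsing_inv_mul _ hBH]

lemma mul_log_det_sub_trace_smul_one (n : ℝ) :
    n * log (n • 1 : Matrix ι ι ℝ).det - trace (n • 1 : Matrix ι ι ℝ)
      = Fintype.card ι * (n * log n - n) := by
  rw [det_smul, det_one, mul_one, log_pow, trace_smul, trace_one, smul_eq_mul]
  ring

namespace PosDef

variable {A : Matrix ι ι ℝ} (hA : A.PosDef) {n : ℝ}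
include hA

lemma mul_log_det_sub_trace_eq_sum :
    n * log A.det - A.trace = ∑ i, (n * log (hA.1.eigenvalues i) - hA.1.eigenvalues i) := by
  rw [hA.1.det_eq_prod_eigenvalues, hA.1.trace_eq_sum_eigenvalues]
  simp only [RCLike.ofReal_real_eq_id, id]
  rw [log_prod fun i _ => (hA.eigenvalues_pos i).ne', Finset.mul_sum, Finset.sum_sub_distrib]

lemma mul_log_det_sub_trace_le (hn : 0 < n) :
    n * log A.det - A.trace ≤ Fintype.card ι * (n * log n - n) := by
  rw [hA.mul_log_det_sub_trace_eq_sum, ← nsmul_eq_mul, ← Finset.card_univ, ← Finset.sum_const]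
  exact Finset.sum_le_sum fun i _ => mul_log_sub_le_mul_log_sub hn (hA.eigenvalues_pos i)

lemma eq_smul_one_of_mul_log_det_sub_trace_eq (hn : 0 < n)
    (h : n * log A.det - A.trace = Fintype.card ι * (n * log n - n)) : A = n • 1 := by
  rw [hA.mul_log_det_sub_trace_eq_sum, ← nsmul_eq_mul, ← Finset.card_univ, ← Finset.sum_const,
    Finset.sum_eq_sum_iff_of_le fun i _ => mul_log_sub_le_mul_log_sub hn (hA.eigenvalues_pos i)]
    at h
  refine hA.1.eq_smul_one_of_eigenvalues_eq fun i => ?_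
  by_contra hne
  exact (mul_log_sub_lt_mul_log_sub hn (hA.eigenvalues_pos i) hne).ne (h i (Finset.mem_univ i))

end PosDef

end Matrix

section GaussianProfile

variable {ι : Type*} [Fintype ι] [DecidableEq ι]

noncomputable def gaussianProfile (n : ℝ) (S Sig : Matrix ι ι ℝ) : ℝ :=
  -(n / 2) * log Sig.det - (1 / 2) * trace (S * Sig⁻¹)

lemma gaussianProfile_eq_of_conjTranspose_mul_eq {B S Sig : Matrix ι ι ℝ} (hB : IsUnit B)
    (hSig : IsUnit Sig) (hBS : Bᴴ * B = S) (n : ℝ) :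
    gaussianProfile n S Sig = -(n / 2) * log S.det
      + (n * log (B * Sig⁻¹ * Bᴴ).det - (B * Sig⁻¹ * Bᴴ).trace) / 2 := by
  have hS : S.det ≠ 0 := by
    rw [← hBS]; exact ((isUnit_iff_isUnit_det _).1 (hB.star.mul hB)).ne_zero
  have hdet : (B * Sig⁻¹ * Bᴴ).det = S.det * Sig.det⁻¹ := by
    rw [← hBS, det_mul, det_mul, det_mul, det_nonsing_inv, Ring.inverse_eq_inv']
    ring
  have htrace : (B * Sig⁻¹ * Bᴴ).trace = trace (S * Sig⁻¹) := by
    rw [trace_mul_cycle, ← hBS]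
  rw [gaussianProfile, htrace, hdet,
    log_mul hS (inv_ne_zero ((isUnit_iff_isUnit_det _).1 hSig).ne_zero), log_inv]
  ring

end GaussianProfile

/-- The function `Sig ↦ -(n/2)·log det Sig - (1/2)·tr(S Sig⁻¹)` on `k×k` symmetric
positive definite matrices attains its unique maximum at `Sig = S/n`. -/
theorem gaussian_profile_max {k : ℕ} (n : ℝ) (hn : 0 < n)
    (S : Matrix (Fin k) (Fin k) ℝ) (hS : S.PosDef) :
    (∀ Sig : Matrix (Fin k) (Fin k) ℝ, Sig.PosDef →
        -(n / 2) * Real.log Sig.det - (1 / 2) * Matrix.trace (S * Sig⁻¹)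
          ≤ -(n / 2) * Real.log ((n⁻¹ • S).det)
              - (1 / 2) * Matrix.trace (S * (n⁻¹ • S)⁻¹)) ∧
    (∀ Sig : Matrix (Fin k) (Fin k) ℝ, Sig.PosDef →
        -(n / 2) * Real.log Sig.det - (1 / 2) * Matrix.trace (S * Sig⁻¹)
          = -(n / 2) * Real.log ((n⁻¹ • S).det)
              - (1 / 2) * Matrix.trace (S * (n⁻¹ • S)⁻¹) →
        Sig = n⁻¹ • S) := by
  obtain ⟨B, hB, hBS⟩ := hS.exists_isUnit_conjTranspose_mul_self_eq
  have hconj : ∀ Sig : Matrix (Fin k) (Fin k) ℝ, Sig.PosDef → (B * Sig⁻¹ * Bᴴ).PosDef :=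
    fun Sig hSig => (IsUnit.posDef_star_right_conjugate_iff hB).2 hSig.inv
  have hvalue : ∀ Sig : Matrix (Fin k) (Fin k) ℝ, Sig.PosDef → gaussianProfile n S Sig
      = -(n / 2) * log S.det + (n * log (B * Sig⁻¹ * Bᴴ).det - (B * Sig⁻¹ * Bᴴ).trace) / 2 :=
    fun Sig hSig => gaussianProfile_eq_of_conjTranspose_mul_eq hB hSig.isUnit hBS n
  have hSn : (n⁻¹ • S).PosDef := hS.smul (inv_pos.2 hn)
  have hmax : gaussianProfile n S (n⁻¹ • S)
      = -(n / 2) * log S.det + Fintype.card (Fin k) * (n * log n - n) / 2 := by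
    rw [hvalue _ hSn, (mul_inv_mul_conjTranspose_eq_smul_one_iff hB hSn.isUnit hn.ne').2
      (by rw [hBS]), mul_log_det_sub_trace_smul_one]
  refine ⟨fun Sig hSig => ?_, fun Sig hSig heq => ?_⟩
  · change gaussianProfile n S Sig ≤ gaussianProfile n S (n⁻¹ • S)
    have := (hconj Sig hSig).mul_log_det_sub_trace_le hn
    rw [hvalue Sig hSig, hmax]
    linarith
  · change gaussianProfile n S Sig = gaussianProfile n S (n⁻¹ • S) at heq
    rw [hvalue Sig hSig, hmax] at heq
    rw [← hBS, ← mul_inv_mul_conjTranspose_eq_smul_one_iff hB hSig.isUnit hn.ne']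
    exact (hconj Sig hSig).eq_smul_one_of_mul_log_det_sub_trace_eq hn (by linarith)
end

section
/- Let H be Haar-distributed on the orthogonal group O(n) with n ≥ 2. Then E(tr(H²)) = 1. -/
/-!
Left multiplication by an orthogonal matrix preserves Haar measure. Flipping the sign of row `i`
shows `E[H i j * H j i] = 0` for `i ≠ j`, and swapping two rows shows that `E[H i i ^ 2]` does not
depend on the row, so `E[tr H²] = ∑ i, E[H i i ^ 2] = E[∑ i, H r i ^ 2] = 1` for any fixed row `r`.
-/

open Matrix MeasureTheory

theorem Matrix.trace_sq_eq_sum {ι R : Type*} [Fintype ι] [DecidableEq ι] [Semiring R]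
    (A : Matrix ι ι R) :
    trace (A ^ 2) = ∑ i, ∑ j, A i j * A j i := by
  simp [trace, sq, mul_apply]

namespace Matrix.orthogonalGroup

variable {ι : Type*} [Fintype ι] [DecidableEq ι]

theorem sum_mul_self_row {H : Matrix ι ι ℝ} (hH : H ∈ orthogonalGroup ι ℝ) (i : ι) :
    ∑ j, H i j * H i j = 1 := by
  simpa [mul_apply] using congr_fun₂ ((mem_orthogonalGroup_iff ι ℝ).mp hH) i i

theorem abs_entry_le_one {H : Matrix ι ι ℝ} (hH : H ∈ orthogonalGroup ι ℝ) (i j : ι) :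
    |H i j| ≤ 1 :=
  entry_norm_bound_of_unitary hH i j

theorem diagonal_mem {d : ι → ℝ} (hd : ∀ k, d k * d k = 1) :
    diagonal d ∈ orthogonalGroup ι ℝ :=
  (mem_orthogonalGroup_iff ι ℝ).mpr <| by simp [diagonal_mul_diagonal, hd]

theorem permMatrix_mem (σ : Equiv.Perm ι) : σ.permMatrix ℝ ∈ orthogonalGroup ι ℝ :=
  (mem_orthogonalGroup_iff ι ℝ).mpr <| by simp [← permMatrix_mul]

section Integral

variable [MeasurableSpace (orthogonalGroup ι ℝ)] [BorelSpace (orthogonalGroup ι ℝ)]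
  (μ : Measure (orthogonalGroup ι ℝ))

theorem integrable_entry_mul_entry [IsFiniteMeasure μ] (i j k l : ι) :
    Integrable (fun H : orthogonalGroup ι ℝ => (H : Matrix ι ι ℝ) i j * (H : Matrix ι ι ℝ) k l)
      μ := by
  refine Integrable.of_bound (Continuous.aestronglyMeasurable ?_) 1 (.of_forall fun H => ?_)
  · exact (continuous_subtype_val.matrix_elem i j).mul (continuous_subtype_val.matrix_elem k l)
  · rw [Real.norm_eq_abs, abs_mul]
    exact mul_le_one₀ (abs_entry_le_one H.2 i j) (abs_nonneg _) (abs_entry_le_one H.2 k l)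

variable [μ.IsMulLeftInvariant]

theorem integral_comp_mul_left {E : Type*} [NormedAddCommGroup E] [NormedSpace ℝ E]
    {Q : Matrix ι ι ℝ} (hQ : Q ∈ orthogonalGroup ι ℝ) (F : Matrix ι ι ℝ → E) :
    ∫ H : orthogonalGroup ι ℝ, F (Q * H) ∂μ = ∫ H : orthogonalGroup ι ℝ, F H ∂μ :=
  integral_mul_left_eq_self (fun H : orthogonalGroup ι ℝ => F H) ⟨Q, hQ⟩

theorem integral_entry_mul_entry_of_ne {i k : ι} (hik : i ≠ k) (j l : ι) :
    ∫ H : orthogonalGroup ι ℝ, (H : Matrix ι ι ℝ) i j * (H : Matrix ι ι ℝ) k l ∂μ = 0 := by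
  have hflip := integral_comp_mul_left μ
    (diagonal_mem (d := fun m => if m = i then -1 else 1) fun m => by split_ifs <;> norm_num)
    fun H => H i j * H k l
  simp only [diagonal_mul, ↓reduceIte, if_neg hik.symm, one_mul, neg_mul,
    integral_neg] at hflip
  linarith

theorem integral_entry_mul_self_row_eq (i k j : ι) :
    ∫ H : orthogonalGroup ι ℝ, (H : Matrix ι ι ℝ) i j * (H : Matrix ι ι ℝ) i j ∂μ =
      ∫ H : orthogonalGroup ι ℝ, (H : Matrix ι ι ℝ) k j * (H : Matrix ι ι ℝ) k j ∂μ := by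
  have hswap := integral_comp_mul_left μ (permMatrix_mem (Equiv.swap k i))
    fun H => H k j * H k j
  simpa only [PEquiv.toMatrix_toPEquiv_mul, submatrix_apply, Equiv.swap_apply_left, id] using
    hswap

end Integral

end Matrix.orthogonalGroup

open Matrix.orthogonalGroup in
/-- For `H` Haar-distributed on `O(n)`, `n ≥ 2`: `E(tr(H²)) = 1`. -/
theorem haar_expect_trace_sq {n : ℕ} (hn : 2 ≤ n)
    [MeasurableSpace (Matrix.orthogonalGroup (Fin n) ℝ)]
    [BorelSpace (Matrix.orthogonalGroup (Fin n) ℝ)]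
    (μ : Measure (Matrix.orthogonalGroup (Fin n) ℝ))
    [μ.IsHaarMeasure] [IsProbabilityMeasure μ] :
    ∫ H, Matrix.trace (((H : Matrix (Fin n) (Fin n) ℝ)) ^ 2) ∂μ = 1 := by
  let r : Fin n := ⟨0, by omega⟩
  calc ∫ H, trace ((H : Matrix (Fin n) (Fin n) ℝ) ^ 2) ∂μ
      = ∑ i, ∑ j, ∫ H : orthogonalGroup (Fin n) ℝ,
          (H : Matrix (Fin n) (Fin n) ℝ) i j * (H : Matrix (Fin n) (Fin n) ℝ) j i ∂μ := by
        simp_rw [trace_sq_eq_sum]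
        rw [integral_finsetSum _ fun i _ =>
          integrable_finsetSum _ fun j _ => integrable_entry_mul_entry μ i j j i]
        exact Finset.sum_congr rfl fun i _ =>
          integral_finsetSum _ fun j _ => integrable_entry_mul_entry μ i j j i
    _ = ∑ i, ∫ H : orthogonalGroup (Fin n) ℝ,
          (H : Matrix (Fin n) (Fin n) ℝ) r i * (H : Matrix (Fin n) (Fin n) ℝ) r i ∂μ := by
        refine Finset.sum_congr rfl fun i _ => ?_
        rw [Fintype.sum_eq_single i fun j hji => integral_entry_mul_entry_of_ne μ hji.symm j i]
        exact integral_entry_mul_self_row_eq μ i r i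
    _ = 1 := by
        rw [← integral_finsetSum _ fun i _ => integrable_entry_mul_entry μ r i r i]
        simp [sum_mul_self_row (Subtype.prop _)]
end

section
/- Let H be Haar-distributed on the orthogonal group O(n) with n ≥ 2. Then E(tr(H)²) = 1. -/
/-!
Left multiplication by the reflection in a coordinate hyperplane flips the sign of one row, so by
invariance of Haar measure `E[H i j * H k l] = 0` for `i ≠ k`; left multiplication by a
transposition swaps two rows, so `E[H i j ^ 2]` does not depend on `i`, and since each column is a
unit vector it equals `1 / n`. Expanding `tr(H)^2 = ∑ i, ∑ k, H i i * H k k`, only the `n` diagonal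
terms survive, each contributing `1 / n`.
-/

open Matrix MeasureTheory

namespace Matrix

variable {ι : Type*} [Fintype ι] [DecidableEq ι]

theorem diagonal_mem_orthogonalGroup {R : Type*} [CommRing R] {d : ι → R}
    (hd : ∀ i, d i * d i = 1) : diagonal d ∈ orthogonalGroup ι R := by
  rw [mem_orthogonalGroup_iff, diagonal_transpose, diagonal_mul_diagonal, ← diagonal_one]
  exact congrArg diagonal (funext hd)

theorem permMatrix_mem_orthogonalGroup (R : Type*) [CommRing R] (σ : Equiv.Perm ι) :
    σ.permMatrix R ∈ orthogonalGroup ι R := by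
  rw [mem_orthogonalGroup_iff, ← PEquiv.toMatrix_symm, ← Equiv.toPEquiv_symm,
    ← PEquiv.toMatrix_trans, ← Equiv.toPEquiv_trans]
  simp

namespace orthogonalGroup

def coordReflection (a : ι) : orthogonalGroup ι ℝ :=
  ⟨diagonal fun i => if i = a then -1 else 1,
    diagonal_mem_orthogonalGroup fun i => by split_ifs <;> norm_num⟩

def ofPerm (σ : Equiv.Perm ι) : orthogonalGroup ι ℝ :=
  ⟨σ.permMatrix ℝ, permMatrix_mem_orthogonalGroup ℝ σ⟩

theorem coordReflection_mul_apply (a : ι) (H : orthogonalGroup ι ℝ) (i j : ι) :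
    (coordReflection a * H) i j = (if i = a then -1 else 1) * H i j :=
  diagonal_mul _ _ _ _

theorem ofPerm_mul_apply (σ : Equiv.Perm ι) (H : orthogonalGroup ι ℝ) (i j : ι) :
    (ofPerm σ * H) i j = H (σ i) j :=
  congrFun (congrFun (PEquiv.toMatrix_toPEquiv_mul σ (H : Matrix ι ι ℝ)) i) j

theorem sum_sq_apply_left (H : orthogonalGroup ι ℝ) (j : ι) : ∑ k, H k j ^ 2 = 1 := by
  have h := congrFun (congrFun ((mem_orthogonalGroup_iff' ι ℝ).1 H.2) j) j
  simpa [mul_apply, sq] using h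

theorem continuous_apply (i j : ι) : Continuous fun H : orthogonalGroup ι ℝ => H i j :=
  continuous_subtype_val.matrix_elem i j

theorem norm_apply_le_one (H : orthogonalGroup ι ℝ) (i j : ι) : ‖H i j‖ ≤ 1 :=
  entry_norm_bound_of_unitary H.2 i j

variable [MeasurableSpace (orthogonalGroup ι ℝ)] [BorelSpace (orthogonalGroup ι ℝ)]
  {μ : Measure (orthogonalGroup ι ℝ)}

theorem integrable_apply_mul_apply [IsFiniteMeasure μ] (i j k l : ι) :
    Integrable (fun H : orthogonalGroup ι ℝ => H i j * H k l) μ := by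
  refine Integrable.of_bound
    ((continuous_apply i j).mul (continuous_apply k l)).aestronglyMeasurable 1
    (ae_of_all _ fun H => ?_)
  rw [norm_mul, ← one_mul 1]
  exact mul_le_mul (norm_apply_le_one H i j) (norm_apply_le_one H k l) (norm_nonneg _) zero_le_one

variable [μ.IsMulLeftInvariant]

theorem integral_apply_mul_apply_eq_zero {i k : ι} (hik : i ≠ k) (j l : ι) :
    ∫ H, H i j * H k l ∂μ = 0 :=
  integral_eq_zero_of_mul_left_eq_neg (g := coordReflection i) fun H => by
    simp only [coordReflection_mul_apply, if_neg hik.symm, ↓reduceIte]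
    ring

theorem integral_sq_apply_eq (i k j : ι) : ∫ H, H i j ^ 2 ∂μ = ∫ H, H k j ^ 2 ∂μ := by
  rw [← integral_mul_left_eq_self (fun H : orthogonalGroup ι ℝ => H i j ^ 2)
    (ofPerm (Equiv.swap i k))]
  simp only [ofPerm_mul_apply, Equiv.swap_apply_left]

theorem integral_sq_apply [IsProbabilityMeasure μ] (i j : ι) :
    ∫ H, H i j ^ 2 ∂μ = (Fintype.card ι : ℝ)⁻¹ := by
  have hsum : ∑ k, ∫ H, H k j ^ 2 ∂μ = 1 := by
    simp_rw [sq]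
    rw [← integral_finsetSum _ fun k _ => integrable_apply_mul_apply k j k j]
    simp_rw [← sq, sum_sq_apply_left, integral_const, probReal_univ, one_smul]
  simp_rw [← integral_sq_apply_eq i, Finset.sum_const, Finset.card_univ, nsmul_eq_mul] at hsum
  exact eq_inv_of_mul_eq_one_right hsum

theorem integral_trace_sq [Nonempty ι] [IsProbabilityMeasure μ] :
    ∫ H : orthogonalGroup ι ℝ, (H : Matrix ι ι ℝ).trace ^ 2 ∂μ = 1 := by
  have hdiag (i : ι) : ∫ H, ∑ k, H i i * H k k ∂μ = (Fintype.card ι : ℝ)⁻¹ := by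
    rw [integral_finsetSum _ fun k _ => integrable_apply_mul_apply i i k k,
      Finset.sum_eq_single_of_mem i (Finset.mem_univ i)
        fun k _ hki => integral_apply_mul_apply_eq_zero hki.symm i k]
    simp_rw [← sq, integral_sq_apply]
  simp_rw [trace, diag, sq, Finset.sum_mul_sum]
  rw [integral_finsetSum _ fun i _ => integrable_finsetSum _ fun k _ =>
    integrable_apply_mul_apply i i k k]
  simp_rw [hdiag, Finset.sum_const, Finset.card_univ, nsmul_eq_mul]
  exact mul_inv_cancel₀ (Nat.cast_ne_zero.2 Fintype.card_ne_zero)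

end orthogonalGroup
end Matrix

/-- For `H` Haar-distributed on `O(n)`, `n ≥ 2`: `E(tr(H)²) = 1`. -/
theorem haar_expect_sq_trace {n : ℕ} (hn : 2 ≤ n)
    [MeasurableSpace (Matrix.orthogonalGroup (Fin n) ℝ)]
    [BorelSpace (Matrix.orthogonalGroup (Fin n) ℝ)]
    (μ : Measure (Matrix.orthogonalGroup (Fin n) ℝ))
    [μ.IsHaarMeasure] [IsProbabilityMeasure μ] :
    ∫ H, (Matrix.trace ((H : Matrix (Fin n) (Fin n) ℝ))) ^ 2 ∂μ = 1 := by
  have : Nonempty (Fin n) := ⟨⟨0, by omega⟩⟩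
  exact orthogonalGroup.integral_trace_sq
end
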